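/- Let φ(x) = x + higher order terms be a formal power series in one variable over a field of characteristic zero, with order of φ(x) − x equal to d+1 ≥ 2. Then for each m ≥ 1, the order of Φ_m(x) = Σ_{k=0}^m (-1)^k C(m,k) φ^{∘k}(x) is at least m·d + 1. -/

import Mathlib

/-!
Writing `Φ_{m+1} = Φ_m - Φ_m ∘ φ`, it suffices that `f ↦ f - f ∘ φ` raises the `X`-adic order
by at least `d`. Coefficientwise, `f ∘ φ - f = ∑ₖ fₖ (φᵏ - Xᵏ)`, and `φ - X ∈ (X^(d+1))` gives
`φᵏ - Xᵏ ∈ (X^(k+d))`, since `φᵏ⁺¹ - Xᵏ⁺¹ = φ (φᵏ - Xᵏ) + Xᵏ (φ - X)` with `X ∣ φ`.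
-/

open PowerSeries

/-- Composition `f ∘ g` of formal power series in one variable (intended for `g` with zero
constant term): the coefficient of `X^d` only involves `(coeff k f)` for `k ≤ d`. -/
noncomputable def PowerSeries.compose {F : Type*} [CommRing F] (f g : PowerSeries F) :
    PowerSeries F :=
  PowerSeries.mk fun d => ∑ k ∈ Finset.range (d + 1), coeff k f * coeff d (g ^ k)

/-- `k`-fold compositional iterate `φ^{∘k}`, with `φ^{∘0} = id = X`. -/
noncomputable def PowerSeries.iterComp {F : Type*} [CommRing F] (φ : PowerSeries F) :
    ℕ → PowerSeries F
  | 0 => PowerSeries.X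
  | k + 1 => PowerSeries.compose (PowerSeries.iterComp φ k) φ

/-- `Φ_m = ∑_{k=0}^m (-1)^k C(m,k) φ^{∘k}`. -/
noncomputable def PowerSeries.Phi {F : Type*} [CommRing F] (φ : PowerSeries F) (m : ℕ) :
    PowerSeries F :=
  ∑ k ∈ Finset.range (m + 1), ((-1 : F) ^ k * (m.choose k : F)) • PowerSeries.iterComp φ k

theorem pow_add_dvd_pow_sub_pow {R : Type*} [CommRing R] {x y : R} {d : ℕ}
    (h : x ^ (d + 1) ∣ y - x) (k : ℕ) : x ^ (k + d) ∣ y ^ k - x ^ k := by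
  have hxy : x ∣ y := by
    simpa using (dvd_pow_self x d.succ_ne_zero |>.trans h).add (dvd_refl x)
  induction k with
  | zero => simp
  | succ k ih =>
    have hsplit : y ^ (k + 1) - x ^ (k + 1) = y * (y ^ k - x ^ k) + x ^ k * (y - x) := by ring
    rw [hsplit]
    refine dvd_add ?_ ?_
    · rw [show k + 1 + d = 1 + (k + d) by omega, pow_add, pow_one]
      exact mul_dvd_mul hxy ih
    · rw [show k + 1 + d = k + (d + 1) by omega, pow_add]
      exact mul_dvd_mul_left _ h

namespace PowerSeries

variable {R : Type*}

theorem X_pow_dvd_iff_le_order [Semiring R] {n : ℕ} {f : R⟦X⟧} :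
    X ^ n ∣ f ↔ (n : ℕ∞) ≤ f.order := by
  rw [order_eq_emultiplicity_X, pow_dvd_iff_le_emultiplicity]

variable [CommRing R]

theorem coeff_compose (n : ℕ) (f g : R⟦X⟧) :
    coeff n (compose f g) = ∑ k ∈ Finset.range (n + 1), coeff k f * coeff n (g ^ k) :=
  coeff_mk _ _

theorem compose_sum {ι : Type*} (s : Finset ι) (f : ι → R⟦X⟧) (g : R⟦X⟧) :
    compose (∑ i ∈ s, f i) g = ∑ i ∈ s, compose (f i) g := by
  ext n
  simp only [coeff_compose, map_sum, Finset.sum_mul]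
  exact Finset.sum_comm

theorem compose_smul (c : R) (f g : R⟦X⟧) : compose (c • f) g = c • compose f g := by
  ext n
  simp only [coeff_compose, map_smul, smul_eq_mul, Finset.mul_sum, mul_assoc]

theorem compose_X_right (f : R⟦X⟧) : compose f X = f := by
  ext n
  simp [coeff_compose, coeff_X_pow]

theorem X_pow_add_dvd_sub_compose {f φ : R⟦X⟧} {N d : ℕ} (hf : X ^ N ∣ f)
    (hφ : X ^ (d + 1) ∣ φ - X) : X ^ (N + d) ∣ f - compose f φ := by
  rw [X_pow_dvd_iff]
  intro i hi
  rw [map_sub, ← congrArg (coeff i) (compose_X_right f), coeff_compose, coeff_compose,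
    ← Finset.sum_sub_distrib]
  refine Finset.sum_eq_zero fun k _ => ?_
  rw [← mul_sub, ← map_sub, ← neg_sub, map_neg]
  rcases lt_or_ge k N with hk | hk
  · rw [X_pow_dvd_iff.mp hf k hk, zero_mul]
  · rw [X_pow_dvd_iff.mp (pow_add_dvd_pow_sub_pow hφ k) i (by omega), neg_zero, mul_zero]

theorem Phi_zero (φ : R⟦X⟧) : Phi φ 0 = X := by
  simp [Phi, iterComp]

theorem Phi_succ (φ : R⟦X⟧) (m : ℕ) : Phi φ (m + 1) = Phi φ m - compose (Phi φ m) φ := by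
  have hcoeff : ∀ k, (-1 : R) ^ (k + 1) * ((m + 1).choose (k + 1) : R)
      = (-1) ^ (k + 1) * (m.choose (k + 1) : R) - (-1) ^ k * (m.choose k : R) := by
    intro k
    rw [Nat.choose_succ_succ]
    push_cast
    ring
  have hiter : ∀ k, compose (iterComp φ k) φ = iterComp φ (k + 1) := fun _ => rfl
  rw [Phi, Phi, compose_sum, Finset.sum_range_succ' _ (m + 1)]
  simp only [compose_smul, hiter, hcoeff, sub_smul, Finset.sum_sub_distrib]
  rw [Finset.sum_range_succ _ m,
    Finset.sum_range_succ' (fun k => ((-1 : R) ^ k * (m.choose k : R)) • iterComp φ k) m]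
  simp [Nat.choose_succ_self]
  abel

theorem X_pow_dvd_Phi {φ : R⟦X⟧} {d : ℕ} (hφ : X ^ (d + 1) ∣ φ - X) (m : ℕ) :
    X ^ (m * d + 1) ∣ Phi φ m := by
  induction m with
  | zero => simp [Phi_zero]
  | succ m ih =>
    rw [Phi_succ, show (m + 1) * d + 1 = (m * d + 1) + d by ring]
    exact X_pow_add_dvd_sub_compose ih hφ

end PowerSeries

theorem Phi_order_ge_strong_general {F : Type*} [Field F] (φ : PowerSeries F) (d : ℕ)
    (hord : (φ - PowerSeries.X).order = ((d : ℕ∞) + 1)) (m : ℕ) :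
    (m * d + 1 : ℕ∞) ≤ (PowerSeries.Phi φ m).order := by
  have hφ : (X : PowerSeries F) ^ (d + 1) ∣ φ - X := by
    rw [X_pow_dvd_iff_le_order, hord, Nat.cast_succ]
  exact_mod_cast X_pow_dvd_iff_le_order.mp (X_pow_dvd_Phi hφ m)

/-- if `φ(x) − x` has order `d + 1` with `d ≥ 1`, then for every `m ≥ 1`
the order of `Φ_m(x)` is at least `m·d + 1`. -/
theorem Phi_order_ge_strong {F : Type*} [Field F] [CharZero F] (φ : PowerSeries F)
    (h0 : constantCoeff φ = 0) (h1 : coeff 1 φ = 1) (d : ℕ) (hd : 1 ≤ d)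
    (hord : (φ - PowerSeries.X).order = ((d : ℕ∞) + 1)) (m : ℕ) (hm : 1 ≤ m) :
    (m * d + 1 : ℕ∞) ≤ (PowerSeries.Phi φ m).order :=
  Phi_order_ge_strong_general φ d hord m
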